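/- For every real x > 0, the remainder σ(x) = 12x · ln( Γ(x+1) / (√(2πx) · (x/e)^x) ) satisfies 0 < σ(x) < 1; equivalently, Γ(x+1) = √(2πx)·(x/e)^x·exp(σ(x)/(12x)) with σ(x) ∈ (0,1). -/

import Mathlib

open Real Filter Topology

/-- The Stirling remainder `σ(x) = 12x · ln( Γ(x+1) / (√(2πx)·(x/e)^x) )`. -/
noncomputable def stirlingSigma (x : ℝ) : ℝ :=
  12 * x * Real.log (Real.Gamma (x + 1) / (Real.sqrt (2 * π * x) * (x / Real.exp 1) ^ x))

lemma log_ratio_gt {t : ℝ} (h0 : 0 < t) (h1 : t < 1) :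
    2 * t < Real.log (1 + t) - Real.log (1 - t) := by
  set M : ℝ → ℝ := fun s => Real.log (1 + s) - Real.log (1 - s) - 2 * s with hM
  have key : StrictMonoOn M (Set.Ico (0:ℝ) 1) := by
    apply strictMonoOn_of_deriv_pos (convex_Ico 0 1)
    · apply ContinuousOn.sub
      apply ContinuousOn.sub
      · exact (Real.continuousOn_log.comp (by fun_prop)
          (fun s hs => by simp only [Set.mem_Ico] at hs; intro h; simp at h; linarith [hs.1]))
      · exact (Real.continuousOn_log.comp (by fun_prop)
          (fun s hs => by simp only [Set.mem_Ico] at hs; intro h; simp at h; linarith [hs.2]))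
      · fun_prop
    · intro s hs
      rw [interior_Ico] at hs
      obtain ⟨hs0, hs1⟩ := hs
      have h1p : (0:ℝ) < 1 + s := by linarith
      have h1m : (0:ℝ) < 1 - s := by linarith
      have d1 : HasDerivAt (fun s : ℝ => Real.log (1 + s)) (1 / (1 + s)) s := by
        simpa using ((hasDerivAt_id s).const_add 1).log h1p.ne'
      have d2 : HasDerivAt (fun s : ℝ => Real.log (1 - s)) (-1 / (1 - s)) s := by
        simpa using ((hasDerivAt_id s).const_sub 1).log h1m.ne'
      have d3 : HasDerivAt M (1 / (1 + s) - -1 / (1 - s) - 2) s := by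
        exact ((d1.sub d2).sub ((hasDerivAt_id s).const_mul 2)).congr_deriv (by ring)
      rw [d3.deriv]
      rw [div_sub_div _ _ h1p.ne' h1m.ne']
      rw [sub_pos, lt_div_iff₀ (by positivity)]
      nlinarith
  have := key (Set.left_mem_Ico.2 one_pos) (Set.mem_Ico.2 ⟨h0.le, h1⟩) h0
  simp only [hM, Real.log_one, add_zero, sub_zero, mul_zero] at this
  linarith

lemma log_ratio_lt {t : ℝ} (h0 : 0 < t) (h1 : t < 1) :
    Real.log (1 + t) - Real.log (1 - t) < 2 * t + (2/3) * t^3 / (1 - t^2) := by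
  set L : ℝ → ℝ := fun s => 2 * s + (2/3) * s^3 / (1 - s^2) - (Real.log (1 + s) - Real.log (1 - s))
    with hL
  have key : StrictMonoOn L (Set.Ico (0:ℝ) 1) := by
    apply strictMonoOn_of_deriv_pos (convex_Ico 0 1)
    · apply ContinuousOn.sub
      · apply ContinuousOn.add (by fun_prop)
        apply ContinuousOn.div (by fun_prop) (by fun_prop)
        intro s hs
        simp only [Set.mem_Ico] at hs
        nlinarith [hs.1, hs.2]
      · apply ContinuousOn.sub
        · exact (Real.continuousOn_log.comp (by fun_prop)
            (fun s hs => by simp only [Set.mem_Ico] at hs; intro h; simp at h; linarith [hs.1]))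
        · exact (Real.continuousOn_log.comp (by fun_prop)
            (fun s hs => by simp only [Set.mem_Ico] at hs; intro h; simp at h; linarith [hs.2]))
    · intro s hs
      rw [interior_Ico] at hs
      obtain ⟨hs0, hs1⟩ := hs
      have h1p : (0:ℝ) < 1 + s := by linarith
      have h1m : (0:ℝ) < 1 - s := by linarith
      have hden : (0:ℝ) < 1 - s^2 := by nlinarith
      have d1 : HasDerivAt (fun s : ℝ => Real.log (1 + s)) (1 / (1 + s)) s := by
        simpa using ((hasDerivAt_id s).const_add 1).log h1p.ne'
      have d2 : HasDerivAt (fun s : ℝ => Real.log (1 - s)) (-1 / (1 - s)) s := by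
        simpa using ((hasDerivAt_id s).const_sub 1).log h1m.ne'
      have d4 : HasDerivAt (fun s : ℝ => (2/3) * s^3 / (1 - s^2))
          ((2 * s^2 * (1 - s^2) + (2/3) * s^3 * (2 * s)) / (1 - s^2)^2) s := by
        have dn : HasDerivAt (fun s : ℝ => (2/3) * s^3) (2 * s^2) s := by
          have := (hasDerivAt_pow 3 s).const_mul (2/3 : ℝ)
          exact this.congr_deriv (by rw [show (3:ℕ) - 1 = 2 from rfl]; push_cast; ring)
        have dd : HasDerivAt (fun s : ℝ => 1 - s^2) (-(2 * s)) s := by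
          have h2 : HasDerivAt (fun y : ℝ => 1 + (-1) * y^2) (1 * (2 * s^(2-1)) * (-1) + 0) s := by
            exact (((hasDerivAt_pow 2 s)).const_mul (-1 : ℝ)).const_add 1 |>.congr_deriv (by push_cast; ring)
          have h3 : (fun y : ℝ => 1 + (-1) * y^2) = (fun y : ℝ => 1 - y^2) := by ext y; ring
          rw [h3] at h2
          exact h2.congr_deriv (by push_cast; ring)
        have := dn.div dd hden.ne'
        exact this.congr_deriv (by ring)
      have d5 : HasDerivAt L
          (2 + (2 * s^2 * (1 - s^2) + (2/3) * s^3 * (2 * s)) / (1 - s^2)^2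
            - (1 / (1 + s) - -1 / (1 - s))) s := by
        have := (((hasDerivAt_id s).const_mul 2).add d4).sub (d1.sub d2)
        exact this.congr_deriv (by ring)
      rw [d5.deriv]
      have h1 : 1 / (1 + s) - -1 / (1 - s) = 2 / (1 - s^2) := by
        field_simp
        ring
      rw [h1]
      have expand : 2 + (2 * s^2 * (1 - s^2) + (2/3) * s^3 * (2 * s)) / (1 - s^2)^2
          - 2 / (1 - s^2) = (4/3) * s^4 / (1 - s^2)^2 := by
        field_simp
        ring
      rw [expand]
      positivity
  have := key (Set.left_mem_Ico.2 one_pos) (Set.mem_Ico.2 ⟨h0.le, h1⟩) h0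
  simp only [hL, Real.log_one, add_zero, sub_zero, mul_zero, zero_pow, zero_div,
    zero_add, sub_self] at this
  norm_num at this
  linarith

noncomputable def binetG (x : ℝ) : ℝ := (x + 1/2) * (Real.log (x + 1) - Real.log x) - 1

lemma binetG_bounds {x : ℝ} (hx : 0 < x) :
    0 < binetG x ∧ binetG x < 1 / (12 * x) - 1 / (12 * (x + 1)) := by
  obtain ⟨t, htx, ht0, ht1⟩ : ∃ t : ℝ, t = 1 / (2 * x + 1) ∧ 0 < t ∧ t < 1 :=
    ⟨1 / (2 * x + 1), rfl, by positivity, by rw [div_lt_one (by linarith)]; linarith⟩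
  have htne : (2 * x + 1) ≠ 0 := by linarith
  have hlog : Real.log (x + 1) - Real.log x = Real.log (1 + t) - Real.log (1 - t) := by
    have h1 : 1 + t = (2 * (x + 1)) / (2 * x + 1) := by rw [htx]; field_simp; try ring
    have h2 : 1 - t = (2 * x) / (2 * x + 1) := by rw [htx]; field_simp; try ring
    rw [h1, h2, Real.log_div (by positivity) htne,
      Real.log_div (by positivity) htne,
      Real.log_mul (by norm_num) (by positivity), Real.log_mul (by norm_num) hx.ne']
    ring
  have e1 : (x + 1/2) * (2 * t) = 1 := by rw [htx]; field_simp; try ring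
  have hx2 : (0:ℝ) < x + 1/2 := by linarith
  have h1mt : (0:ℝ) < 1 - t^2 := by nlinarith
  constructor
  · have h := log_ratio_gt ht0 ht1
    have := mul_lt_mul_of_pos_left h hx2
    rw [e1] at this
    rw [binetG, hlog]
    linarith
  · have h := log_ratio_lt ht0 ht1
    have hmul := mul_lt_mul_of_pos_left h hx2
    have e2 : (x + 1/2) * (2 * t + (2/3) * t^3 / (1 - t^2)) - 1
        = 1 / (12 * x) - 1 / (12 * (x + 1)) := by
      have h1mtx : 1 - t^2 = (4 * x * (x + 1)) / (2 * x + 1)^2 := by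
        rw [htx]; field_simp; try ring
      rw [htx] at h1mtx ⊢
      rw [h1mtx]
      have hxne := hx.ne'
      have hx1ne : (x + 1) ≠ 0 := by linarith
      field_simp
      ring
    rw [binetG, hlog]
    linarith

noncomputable def binetMu (x : ℝ) : ℝ :=
  Real.log (Real.Gamma x) - (x - 1/2) * Real.log x + x - Real.log (Real.sqrt (2 * π))

lemma log_Gamma_add_one {x : ℝ} (hx : 0 < x) :
    Real.log (Real.Gamma (x + 1)) = Real.log x + Real.log (Real.Gamma x) := by
  rw [Real.Gamma_add_one hx.ne', Real.log_mul hx.ne' (Real.Gamma_pos_of_pos hx).ne']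

lemma binetMu_rec {x : ℝ} (hx : 0 < x) : binetMu x = binetG x + binetMu (x + 1) := by
  unfold binetMu binetG
  rw [log_Gamma_add_one hx]
  ring

lemma binetMu_telescope {x : ℝ} (hx : 0 < x) (n : ℕ) :
    binetMu (x + n) ≤ binetMu x ∧
    binetMu x ≤ 1 / (12 * x) - 1 / (12 * (x + n)) + binetMu (x + n) := by
  induction n with
  | zero => simp
  | succ n ih =>
    have hxn : 0 < x + n := by positivity
    obtain ⟨hg0, hg1⟩ := binetG_bounds hxn
    have hrec := binetMu_rec hxn
    have hcast : x + (n + 1 : ℕ) = (x + n) + 1 := by push_cast; ring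
    rw [hcast]
    constructor
    · linarith [ih.1]
    · have : (1:ℝ) / (12 * (x + n)) - 1 / (12 * (x + n + 1)) > binetG (x + n) := by
        linarith
      linarith [ih.2]

lemma binetMu_nat_formula {n : ℕ} (hn : 1 ≤ n) :
    binetMu ((n : ℝ) + 1) = Real.log (Stirling.stirlingSeq n) - Real.log (Real.sqrt π)
      - binetG n := by
  have hn0 : (0:ℝ) < n := by exact_mod_cast hn
  have hn1 : (0:ℝ) < (n:ℝ) + 1 := by linarith
  have hfact : Real.Gamma ((n:ℝ) + 1) = (n.factorial : ℝ) := Real.Gamma_nat_eq_factorial n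
  have hsq : Real.log (Stirling.stirlingSeq n)
      = Real.log (n.factorial : ℝ) - (Real.log 2 + Real.log n) / 2 - n * (Real.log n - 1) := by
    rw [Stirling.stirlingSeq]
    rw [Real.log_div (by positivity) (by positivity)]
    rw [Real.log_mul (by positivity) (by positivity)]
    rw [Real.log_sqrt (by positivity), Real.log_mul (by norm_num) hn0.ne']
    rw [Real.log_pow, Real.log_div hn0.ne' (Real.exp_ne_zero 1), Real.log_exp]
    ring
  have hsp : Real.log (Real.sqrt (2 * π)) = (Real.log 2 + Real.log π) / 2 := by
    rw [Real.log_sqrt (by positivity), Real.log_mul (by norm_num) Real.pi_ne_zero]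
  have hsp2 : Real.log (Real.sqrt π) = Real.log π / 2 := Real.log_sqrt Real.pi_pos.le
  rw [binetMu, binetG, hfact, hsq, hsp, hsp2]
  ring

lemma binetMu_nat_tendsto : Tendsto (fun n : ℕ => binetMu n) atTop (𝓝 0) := by
  have hg : Tendsto (fun n : ℕ => binetG n) atTop (𝓝 0) := by
    apply tendsto_of_tendsto_of_tendsto_of_le_of_le' tendsto_const_nhds
      tendsto_one_div_atTop_nhds_zero_nat
    · filter_upwards [eventually_ge_atTop 1] with n hn
      exact (binetG_bounds (by exact_mod_cast hn : (0:ℝ) < n)).1.le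
    · filter_upwards [eventually_ge_atTop 1] with n hn
      have hn0 : (0:ℝ) < n := by exact_mod_cast hn
      have h := (binetG_bounds hn0).2
      have h2 : (0:ℝ) < 1 / (12 * ((n:ℝ) + 1)) := by positivity
      have h3 : 1 / (12 * (n:ℝ)) ≤ 1 / (n:ℝ) := by
        apply div_le_div_of_nonneg_left (by norm_num) hn0 (by linarith)
      linarith
  have hlog : Tendsto (fun n : ℕ => Real.log (Stirling.stirlingSeq n)) atTop
      (𝓝 (Real.log (Real.sqrt π))) :=
    Stirling.tendsto_stirlingSeq_sqrt_pi.log (by positivity)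
  have h1 : Tendsto (fun n : ℕ => binetMu ((n : ℝ) + 1)) atTop (𝓝 0) := by
    have := (hlog.sub (tendsto_const_nhds (x := Real.log (Real.sqrt π)))).sub hg
    rw [sub_self, sub_zero] at this
    apply this.congr'
    filter_upwards [eventually_ge_atTop 1] with n hn
    exact (binetMu_nat_formula hn).symm
  rw [← tendsto_add_atTop_iff_nat 1]
  apply h1.congr
  intro n
  push_cast
  ring_nf

lemma binetMu_sandwich {M : ℝ} (hM : 2 ≤ M) {y : ℝ} (h1 : M ≤ y) (h2 : y ≤ M + 1) :
    binetMu M - 2 / (M - 1) ≤ binetMu y ∧ binetMu y ≤ binetMu M + 2 / (M - 1) := by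
  have hM0 : (0:ℝ) < M := by linarith
  have hM1 : (0:ℝ) < M - 1 := by linarith
  have hy0 : (0:ℝ) < y := by linarith
  rcases eq_or_lt_of_le h1 with heq | hlt
  · rw [← heq]
    constructor <;> nlinarith [div_pos (show (0:ℝ) < 2 by norm_num) hM1]
  set F : ℝ → ℝ := fun z => Real.log (Real.Gamma z) with hF
  obtain ⟨t, htdef⟩ : ∃ t : ℝ, t = y - M := ⟨_, rfl⟩
  have ht0 : 0 < t := by rw [htdef]; linarith
  have ht1 : t ≤ 1 := by rw [htdef]; linarith
  -- chord bound
  have hfs : F (M + 1) = Real.log M + F M := log_Gamma_add_one hM0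
  have hfs2 : F M = Real.log (M - 1) + F (M - 1) := by
    have := log_Gamma_add_one (show (0:ℝ) < M - 1 by linarith)
    rw [sub_add_cancel] at this
    exact this
  have hchord : F y ≤ F M + t * Real.log M := by
    have hc := Real.convexOn_log_Gamma.2 (Set.mem_Ioi.2 hM0)
      (Set.mem_Ioi.2 (show (0:ℝ) < M + 1 by linarith))
      (show (0:ℝ) ≤ M + 1 - y by linarith) (show (0:ℝ) ≤ y - M by linarith)
      (by ring : (M + 1 - y) + (y - M) = 1)
    simp only [smul_eq_mul, Function.comp] at hc
    have hpt : (M + 1 - y) * M + (y - M) * (M + 1) = y := by ring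
    rw [hpt] at hc
    calc F y ≤ (M + 1 - y) * F M + (y - M) * F (M + 1) := hc
      _ = F M + t * Real.log M := by rw [hfs, htdef]; ring
  -- slope (lower) bound
  have hslope : F M + t * Real.log (M - 1) ≤ F y := by
    have hs := Real.convexOn_log_Gamma.slope_mono_adjacent
      (Set.mem_Ioi.2 (show (0:ℝ) < M - 1 by linarith)) (Set.mem_Ioi.2 hy0)
      (show M - 1 < M by linarith) hlt
    simp only [Function.comp] at hs
    have e1 : M - (M - 1) = 1 := by ring
    rw [e1, div_one] at hs
    have e2 : F M - F (M - 1) = Real.log (M - 1) := by rw [hfs2]; ring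
    rw [e2, le_div_iff₀ (by linarith : (0:ℝ) < y - M)] at hs
    rw [htdef]
    linarith
  -- log estimates
  have lb1 : Real.log y - Real.log M ≤ t / M := by
    have h := Real.log_le_sub_one_of_pos (show (0:ℝ) < y / M by positivity)
    rw [Real.log_div hy0.ne' hM0.ne'] at h
    have : y / M - 1 = t / M := by rw [htdef]; field_simp
    linarith
  have lb2 : t / (M + 1) ≤ Real.log y - Real.log M := by
    have h := Real.log_le_sub_one_of_pos (show (0:ℝ) < M / y by positivity)
    rw [Real.log_div hM0.ne' hy0.ne'] at h
    have e : M / y - 1 = -(t / y) := by rw [htdef]; field_simp; ring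
    rw [e] at h
    have : t / (M + 1) ≤ t / y := by
      apply div_le_div_of_nonneg_left ht0.le hy0 h2
    linarith
  have lb3 : Real.log M - Real.log (M - 1) ≤ 1 / (M - 1) := by
    have h := Real.log_le_sub_one_of_pos (show (0:ℝ) < M / (M - 1) by positivity)
    rw [Real.log_div hM0.ne' hM1.ne'] at h
    have : M / (M - 1) - 1 = 1 / (M - 1) := by field_simp; ring
    linarith
  have lb4 : 0 ≤ Real.log M - Real.log (M - 1) :=
    sub_nonneg.2 (Real.log_le_log hM1 (by linarith))
  have hy12 : (0:ℝ) ≤ y - 1/2 := by linarith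
  -- main decomposition
  have edec : binetMu y - binetMu M
      = (F y - F M) - (y - 1/2) * (Real.log y - Real.log M) - t * Real.log M + t := by
    simp only [binetMu, hF]
    rw [htdef]
    ring
  constructor
  · -- lower bound
    have hmul : (y - 1/2) * (Real.log y - Real.log M) ≤ (y - 1/2) * (t / M) :=
      mul_le_mul_of_nonneg_left lb1 hy12
    have hmul2 : t * (Real.log M - Real.log (M - 1)) ≤ 1 / (M - 1) := by
      calc t * (Real.log M - Real.log (M - 1)) ≤ 1 * (Real.log M - Real.log (M - 1)) :=
            mul_le_mul_of_nonneg_right ht1 lb4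
        _ ≤ 1 / (M - 1) := by linarith
    have step : binetMu y - binetMu M ≥ t - (y - 1/2) * (t / M) - 1 / (M - 1) := by
      have : F y - F M ≥ t * Real.log M - t * (Real.log M - Real.log (M - 1)) := by
        have : t * Real.log (M - 1) = t * Real.log M - t * (Real.log M - Real.log (M - 1)) := by
          ring
        linarith [hslope]
      linarith [edec, hmul, hmul2]
    have efin : t - (y - 1/2) * (t / M) = t * (1/2 - t) / M := by
      rw [htdef]
      field_simp
      ring
    have hfin : -(1 / (M - 1)) ≤ t * (1/2 - t) / M := by
      have h' : (-1 : ℝ) / (M - 1) ≤ t * (1/2 - t) / M := by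
        rw [div_le_div_iff₀ hM1 hM0]
        nlinarith [sq_nonneg (t - 1/2), mul_pos ht0 hM1, sq_nonneg t]
      rw [neg_div] at h'
      linarith
    rw [efin] at step
    have e2c : 2 / (M - 1) = 1/(M-1) + 1/(M-1) := by ring
    linarith only [step, hfin, e2c]
  · -- upper bound
    have hmul : (y - 1/2) * (t / (M + 1)) ≤ (y - 1/2) * (Real.log y - Real.log M) :=
      mul_le_mul_of_nonneg_left lb2 hy12
    have step : binetMu y - binetMu M ≤ t - (y - 1/2) * (t / (M + 1)) := by
      linarith [edec, hchord, hmul]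
    have efin : t - (y - 1/2) * (t / (M + 1)) = t * (3/2 - t) / (M + 1) := by
      rw [htdef]
      field_simp
      ring
    have hfin : t * (3/2 - t) / (M + 1) ≤ 2 / (M - 1) := by
      rw [div_le_div_iff₀ (by linarith) hM1]
      nlinarith [sq_nonneg (t - 3/4), hM1, ht0, ht1]
    rw [efin] at step
    linarith only [step, hfin]

lemma binetMu_tendsto_shift {x : ℝ} (hx : 0 < x) :
    Tendsto (fun n : ℕ => binetMu (x + n)) atTop (𝓝 0) := by
  set c : ℕ := ⌊x⌋₊ with hc
  have hc1 : (c : ℝ) ≤ x := Nat.floor_le hx.le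
  have hc2 : x ≤ (c : ℝ) + 1 := (Nat.lt_floor_add_one x).le
  have hA : Tendsto (fun n : ℕ => binetMu ((c : ℝ) + n)) atTop (𝓝 0) := by
    have := binetMu_nat_tendsto.comp (tendsto_add_atTop_nat c)
    apply this.congr
    intro n
    simp only [Function.comp]
    push_cast
    ring_nf
  have hd : Tendsto (fun n : ℕ => (c : ℝ) + n - 1) atTop atTop := by
    have h0 : Tendsto (fun n : ℕ => (n : ℝ)) atTop atTop := tendsto_natCast_atTop_atTop
    have h1 := tendsto_atTop_add_const_left atTop (c : ℝ) h0
    have h2 := tendsto_atTop_add_const_right atTop (-1 : ℝ) h1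
    apply h2.congr
    intro n; ring
  have hB : Tendsto (fun n : ℕ => 2 / ((c : ℝ) + n - 1)) atTop (𝓝 0) :=
    Tendsto.div_atTop tendsto_const_nhds hd
  apply tendsto_of_tendsto_of_tendsto_of_le_of_le' (by simpa using hA.sub hB)
    (by simpa using hA.add hB)
  · filter_upwards [eventually_ge_atTop 2] with n hn
    have hM : (2 : ℝ) ≤ (c : ℝ) + n := by
      have h2n : (2:ℝ) ≤ (n:ℝ) := by exact_mod_cast hn
      have h0c : (0:ℝ) ≤ c := Nat.cast_nonneg c
      linarith
    exact (binetMu_sandwich hM (by linarith : (c:ℝ) + n ≤ x + n)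
      (by push_cast; linarith : x + n ≤ (c:ℝ) + n + 1)).1
  · filter_upwards [eventually_ge_atTop 2] with n hn
    have hM : (2 : ℝ) ≤ (c : ℝ) + n := by
      have h2n : (2:ℝ) ≤ (n:ℝ) := by exact_mod_cast hn
      have h0c : (0:ℝ) ≤ c := Nat.cast_nonneg c
      linarith
    exact (binetMu_sandwich hM (by linarith : (c:ℝ) + n ≤ x + n)
      (by push_cast; linarith : x + n ≤ (c:ℝ) + n + 1)).2

lemma binetMu_nonneg_le {x : ℝ} (hx : 0 < x) :
    0 ≤ binetMu x ∧ binetMu x ≤ 1 / (12 * x) := by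
  have htend := binetMu_tendsto_shift hx
  constructor
  · exact le_of_tendsto htend (Eventually.of_forall fun n => (binetMu_telescope hx n).1)
  · have h : binetMu x - 1 / (12 * x) ≤ 0 := by
      apply ge_of_tendsto htend
      apply Eventually.of_forall
      intro n
      have h2 := (binetMu_telescope hx n).2
      have hp : (0:ℝ) < 1 / (12 * (x + n)) := by positivity
      linarith
    linarith

lemma binetMu_bounds {x : ℝ} (hx : 0 < x) :
    0 < binetMu x ∧ binetMu x < 1 / (12 * x) := by
  have hrec := binetMu_rec hx
  obtain ⟨hg0, hg1⟩ := binetG_bounds hx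
  obtain ⟨hm0, hm1⟩ := binetMu_nonneg_le (show (0:ℝ) < x + 1 by linarith)
  constructor
  · linarith
  · linarith

/-- For every `x > 0`, `0 < σ(x) < 1`; equivalently Stirling's formula
`Γ(x+1) = √(2πx)·(x/e)^x·exp(σ(x)/(12x))` holds with `σ(x) ∈ (0,1)`. -/
theorem stirlingSigma_mem_Ioo :
    ∀ x : ℝ, 0 < x → (0 < stirlingSigma x ∧ stirlingSigma x < 1) ∧
      Real.Gamma (x + 1) =
        Real.sqrt (2 * π * x) * (x / Real.exp 1) ^ x * Real.exp (stirlingSigma x / (12 * x)) := by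
  intro x hx
  have hs : (0:ℝ) < Real.sqrt (2 * π * x) := Real.sqrt_pos.2 (by positivity)
  have hr : (0:ℝ) < (x / Real.exp 1) ^ x := Real.rpow_pos_of_pos (by positivity) x
  have hG : (0:ℝ) < Real.Gamma (x + 1) := Real.Gamma_pos_of_pos (by linarith)
  have hD : (0:ℝ) < Real.sqrt (2 * π * x) * (x / Real.exp 1) ^ x := mul_pos hs hr
  have hratio : (0:ℝ) < Real.Gamma (x + 1) / (Real.sqrt (2 * π * x) * (x / Real.exp 1) ^ x) :=
    div_pos hG hD
  have hlogeq : Real.log (Real.Gamma (x + 1) / (Real.sqrt (2 * π * x) * (x / Real.exp 1) ^ x))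
      = binetMu x := by
    rw [Real.log_div hG.ne' hD.ne', Real.log_mul hs.ne' hr.ne',
      Real.log_rpow (by positivity), Real.log_div hx.ne' (Real.exp_ne_zero 1), Real.log_exp,
      Real.log_sqrt (by positivity), Real.log_mul (by positivity : (2 * π : ℝ) ≠ 0) hx.ne',
      log_Gamma_add_one hx, binetMu, Real.log_sqrt (by positivity)]
    ring
  have hsig : stirlingSigma x = 12 * x * binetMu x := by
    rw [stirlingSigma, hlogeq]
  obtain ⟨hm0, hm1⟩ := binetMu_bounds hx
  have h12 : (0:ℝ) < 12 * x := by linarith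
  have hb1 : 0 < stirlingSigma x := by rw [hsig]; positivity
  have hb2 : stirlingSigma x < 1 := by
    rw [hsig]
    have := mul_lt_mul_of_pos_left hm1 h12
    rwa [mul_one_div, div_self h12.ne'] at this
  refine ⟨⟨hb1, hb2⟩, ?_⟩
  have hdiv : stirlingSigma x / (12 * x) = binetMu x := by
    rw [hsig]
    field_simp
  rw [hdiv, ← hlogeq, Real.exp_log hratio]
  field_simp
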